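/- arXiv:1604.05269 — 7 statements merged into one kernel-verified Lean document; each statement's English description precedes it below -/
import Mathlib

section
/- Let A be a finite commutative (nonunital) ring that is nilpotent, i.e., there exists m ≥ 1 such that every product of m elements of A equals 0. Define the circle operation x ∘ y = x + y + x·y on A, for each x ∈ A let τ(x) : A → A be the map τ(x)(z) = x ∘ z (a bijection of A), and for each y ∈ A let λ(y) : A → A be the translation λ(y)(z) = y + z. Let T = { τ(x) : x ∈ A } ⊆ Perm(A). Then λ(y) ∘ τ(x) ∘ λ(y)⁻¹ ∈ T for all x, y ∈ A if and only if x·y·z = 0 for all x, y, z ∈ A. -/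
/-- Let `A` be a finite commutative (nonunital) ring that is nilpotent,
i.e. there is `m ≥ 1` such that every product of `m` elements of `A` is `0`.
With `x ∘ y = x + y + x·y`, `τ x z = x ∘ z`, `λ y z = y + z` and
`T = {τ x : x ∈ A}`, we have `λ y ∘ τ x ∘ (λ y)⁻¹ ∈ T` for all `x, y`
iff `x·y·z = 0` for all `x, y, z ∈ A`. -/
theorem stmt_0 (A : Type*) [NonUnitalCommRing A] [Fintype A]
    (hnil : ∃ m : ℕ, 1 ≤ m ∧ ∀ (a : A) (l : List A), l.length + 1 = m →
      l.foldl (· * ·) a = 0) :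
    (∀ x y : A, ∃ w : A,
        (fun z : A => y + (x + (-y + z) + x * (-y + z))) =
          (fun z : A => w + z + w * z)) ↔
      (∀ x y z : A, x * y * z = 0) := by
  constructor
  · intro h x y z
    obtain ⟨w, hw⟩ := h x y
    have h0 := congrFun hw 0
    have hz := congrFun hw z
    simp only [mul_zero, add_zero, mul_add, mul_neg] at h0 hz
    have hw' : w = y + (x + -y + -(x * y)) := h0.symm
    subst hw'
    simp only [add_mul, neg_mul, mul_assoc] at hz
    have e2 := sub_eq_zero_of_eq hz
    abel_nf at e2
    rw [mul_assoc]
    -- e2 should now say x * (y * z) = 0 or a signed version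
    simpa using e2
  · intro h x y
    refine ⟨x - x * y, funext fun z => ?_⟩
    rw [← sub_eq_zero]
    simp only [mul_add, mul_neg, sub_mul, sub_add_eq_sub_sub]
    abel_nf
    simp [mul_assoc, h x y z]
end

section
/- Let p be a prime with p > 3 and let A be a finite commutative (nonunital) ring whose additive group (A, +) is an abelian p-group, and suppose x·y·z = 0 for all x, y, z ∈ A. Define x ∘ y = x + y + x·y. Then (A, ∘) is an abelian group, and (A, ∘) is isomorphic as a group to (A, +). -/
/-- Let `p > 3` be prime and `A` a finite commutative nonunital ring
whose additive group is an abelian `p`-group, with `x·y·z = 0` for all `x,y,z`.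
Then `x ∘ y = x + y + x·y` makes `A` an abelian group, isomorphic to `(A, +)`. -/
theorem stmt_2 (p : ℕ) (hp : p.Prime) (hp3 : 3 < p)
    (A : Type*) [NonUnitalCommRing A] [Fintype A]
    (hpgroup : IsPGroup p (Multiplicative A))
    (hA3 : ∀ x y z : A, x * y * z = 0) :
    (∀ x y : A, x + y + x * y = y + x + y * x) ∧
    (∀ x y z : A,
      (x + y + x * y) + z + (x + y + x * y) * z =
        x + (y + z + y * z) + x * (y + z + y * z)) ∧
    (∀ x : A, 0 + x + 0 * x = x) ∧
    (∀ x : A, ∃ x' : A, x + x' + x * x' = 0) ∧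
    (∃ φ : A ≃ A, ∀ x y : A, φ (x + y + x * y) = φ x + φ y) := by
  have h0 : ∀ a b c : A, a * (b * c) = 0 := fun a b c => by
    rw [← mul_assoc]; exact hA3 a b c
  refine ⟨?_, ?_, ?_, ?_, ?_⟩
  · intro x y; rw [mul_comm y x]; abel
  · intro x y z
    simp only [mul_add, add_mul, hA3, h0, add_zero, zero_add]
    abel
  · intro x; simp
  · intro x
    refine ⟨x * x - x, ?_⟩
    have : x * (x * x - x) = -(x * x) := by
      rw [mul_sub, h0, zero_sub]
    rw [this]; abel
  · -- construct φ x = x - m • (x*x) where 2*m ≡ 1 mod card A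
    haveI : Fact p.Prime := ⟨hp⟩
    set N := Fintype.card A with hNdef
    have hNz : ∀ x : A, N • x = 0 := fun x => card_nsmul_eq_zero
    have hNpos : 0 < N := Fintype.card_pos
    haveI : NeZero N := ⟨hNpos.ne'⟩
    obtain ⟨n, hn⟩ := IsPGroup.iff_card.mp hpgroup
    have hNcard : N = p ^ n := by
      rw [hNdef, ← Nat.card_eq_fintype_card]; exact hn
    have hcop : Nat.Coprime 2 N := by
      rw [hNcard]
      exact Nat.Coprime.pow_right n
        ((Nat.coprime_primes Nat.prime_two hp).mpr (by omega))
    set u : (ZMod N)ˣ := ZMod.unitOfCoprime 2 hcop with hu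
    set m : ℕ := ((u⁻¹ : (ZMod N)ˣ) : ZMod N).val with hm
    have hmod : (2 * m) % N = 1 % N := by
      have : ((2 * m : ℕ) : ZMod N) = ((1 : ℕ) : ZMod N) := by
        push_cast
        rw [hm, ZMod.natCast_val, ZMod.cast_id]
        have : (u : ZMod N) * ((u⁻¹ : (ZMod N)ˣ) : ZMod N) = 1 := by
          rw [← Units.val_mul, mul_inv_cancel, Units.val_one]
        simp [hu]
      exact (ZMod.natCast_eq_natCast_iff _ _ _).mp this
    have key : ∀ (a : ℕ) (x : A), a • x = (a % N) • x := by
      intro a x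
      conv_lhs => rw [← Nat.div_add_mod a N]
      rw [add_smul, mul_smul, hNz, zero_add]
    have hone : ∀ z : A, (2 * m) • z = z := by
      intro z
      rw [key, hmod, ← key, one_smul]
    have hsqz : ∀ x : A, (x - m • (x * x)) * (x - m • (x * x)) = x * x := by
      intro x
      rw [sub_mul, mul_sub, mul_sub, mul_smul_comm, smul_mul_assoc,
        smul_mul_assoc, mul_smul_comm, h0, hA3, hA3]
      simp
    have hsqz' : ∀ x : A, (x + m • (x * x)) * (x + m • (x * x)) = x * x := by
      intro x
      rw [add_mul, mul_add, mul_add, mul_smul_comm, smul_mul_assoc,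
        smul_mul_assoc, mul_smul_comm, h0, hA3, hA3]
      simp
    refine ⟨⟨fun x => x - m • (x * x), fun x => x + m • (x * x), ?_, ?_⟩, ?_⟩
    · intro x
      simp only [hsqz x]
      abel
    · intro x
      simp only [hsqz' x]
      abel
    · intro x y
      show (x + y + x * y) - m • ((x + y + x * y) * (x + y + x * y)) =
        (x - m • (x * x)) + (y - m • (y * y))
      have hss : (x + y + x * y) * (x + y + x * y)
          = x * x + y * y + 2 • (x * y) := by
        simp only [mul_add, add_mul, hA3, h0, add_zero, zero_add]
        rw [mul_comm y x, two_smul]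
        abel
      rw [hss, smul_add, smul_add, ← mul_smul, mul_comm m 2, hone]
      abel
end

section
/- Let p be an odd prime, Fp = ZMod p, let k be an odd positive natural number, and let q ∈ Fp be nonzero. Then there exists a k×k matrix C over Fp with Cᵀ·C = q·I (where I is the k×k identity matrix) if and only if q is a square in Fp, i.e., there exists t ∈ Fp with q = t². -/
open Matrix

/-- Over `Fp = ZMod p` (`p` an odd prime), for `k` odd and positive
and `q ≠ 0` in `Fp`, there exists a `k×k` matrix `C` with `Cᵀ·C = q·I` iff
`q` is a square in `Fp`. -/
theorem stmt_4 (p : ℕ) (hp : p.Prime) (hodd : Odd p)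
    (k : ℕ) (hk : 0 < k) (hkodd : Odd k) (q : ZMod p) (hq : q ≠ 0) :
    (∃ C : Matrix (Fin k) (Fin k) (ZMod p),
        Cᵀ * C = q • (1 : Matrix (Fin k) (Fin k) (ZMod p))) ↔
      ∃ t : ZMod p, q = t ^ 2 := by
  haveI := Fact.mk hp
  constructor
  · rintro ⟨C, hC⟩
    obtain ⟨m, hm⟩ := hkodd
    have hdet : (C.det) ^ 2 = q ^ k := by
      have := congrArg Matrix.det hC
      rwa [Matrix.det_mul, Matrix.det_transpose, Matrix.det_smul, Matrix.det_one,
        mul_one, ← sq, Fintype.card_fin] at this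
    have hqm : q ^ m ≠ 0 := pow_ne_zero _ hq
    refine ⟨C.det * (q ^ m)⁻¹, ?_⟩
    field_simp
    rw [hdet, hm, pow_add, pow_mul]; ring
  · rintro ⟨t, rfl⟩
    exact ⟨t • 1, by simp [Matrix.transpose_smul, smul_smul, sq]⟩
end

section
/- Let p be an odd prime, Fp = ZMod p, let k be an even positive natural number, and let q ∈ Fp be nonzero. Then there exists a k×k matrix C over Fp with Cᵀ·C = q·I, where I is the k×k identity matrix. -/
open Matrix

lemma aux_block (p : ℕ) [Fact p.Prime] (a b q : ZMod p) (h : a^2 + b^2 = q) :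
    (!![a, b; -b, a])ᵀ * !![a, b; -b, a] = q • (1 : Matrix (Fin 2) (Fin 2) (ZMod p)) := by
  ext i j
  fin_cases i <;> fin_cases j <;>
    simp [Matrix.mul_apply, Fin.sum_univ_succ, Matrix.one_apply, ← h] <;> ring

/-- Over `Fp = ZMod p` (`p` an odd prime), for `k` even and positive
and `q ≠ 0` in `Fp`, there exists a `k×k` matrix `C` with `Cᵀ·C = q·I`. -/
theorem stmt_5 (p : ℕ) (hp : p.Prime) (hodd : Odd p)
    (k : ℕ) (hk : 0 < k) (hkeven : Even k) (q : ZMod p) (hq : q ≠ 0) :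
    ∃ C : Matrix (Fin k) (Fin k) (ZMod p),
      Cᵀ * C = q • (1 : Matrix (Fin k) (Fin k) (ZMod p)) := by
  haveI : Fact p.Prime := ⟨hp⟩
  obtain ⟨a, b, hab⟩ := ZMod.sq_add_sq p q
  obtain ⟨r, hr⟩ := hkeven
  have hk2 : k = 2 * r := by omega
  subst hk2
  let e : Fin 2 × Fin r ≃ Fin (2 * r) := finProdFinEquiv
  set A : Matrix (Fin 2) (Fin 2) (ZMod p) := !![a, b; -b, a] with hA
  refine ⟨reindex e e (blockDiagonal fun _ : Fin r => A), ?_⟩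
  have h2 : Aᵀ * A = q • (1 : Matrix (Fin 2) (Fin 2) (ZMod p)) := aux_block p a b q hab
  rw [Matrix.transpose_reindex, Matrix.reindex_apply, Matrix.reindex_apply,
    Matrix.submatrix_mul_equiv, Matrix.blockDiagonal_transpose,
    ← Matrix.blockDiagonal_mul]
  simp only [h2]
  have : (blockDiagonal fun _ : Fin r => q • (1 : Matrix (Fin 2) (Fin 2) (ZMod p)))
      = q • blockDiagonal fun _ : Fin r => (1 : Matrix (Fin 2) (Fin 2) (ZMod p)) := by
    ext ⟨i, i2⟩ ⟨j, j2⟩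
    simp only [Matrix.blockDiagonal_apply, Matrix.smul_apply]
    split <;> simp
  rw [this]
  ext i j
  simp only [Matrix.submatrix_apply, Matrix.smul_apply, Matrix.blockDiagonal_apply,
    Matrix.one_apply, smul_eq_mul, mul_ite, mul_one, mul_zero]
  by_cases h : i = j
  · simp [h]
  · have h' : e.symm i ≠ e.symm j := fun hh => h (e.symm.injective hh)
    rw [Ne, Prod.ext_iff, not_and_or] at h'
    rcases h' with h' | h' <;> simp [h, h']
end

section
/- Let p be an odd prime, Fp = ZMod p, let k be an even positive natural number, let s ∈ Fp be a nonsquare (so s ≠ 0 and there is no t ∈ Fp with t² = s), and let q ∈ Fp be nonzero. Let D_s be the k×k diagonal matrix diag(1, …, 1, s) (diagonal entries 1 except the last, which is s). Then there exists a k×k matrix C over Fp with Cᵀ·D_s·C = q·D_s. -/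
/-!
Over a finite field of odd order every binary form `x² + t y²` with `t ≠ 0` represents every
element, by pigeonhole: `x²` and `q - t y²` each take more than half of the field's values.
If `u² + t v² = q`, multiplication by `u + v √(-t)` scales the norm form `diag(1, t)` by `q`.
Pairing the coordinates turns `diag(1, …, 1, s)` into a block sum of copies of `diag(1, 1)` and
one `diag(1, s)`, and the block sum of these `2 × 2` similitudes is the required `C`.
-/

open Matrix Polynomial

theorem FiniteField.exists_sq_add_mul_sq_eq {F : Type*} [Field F] [Fintype F]
    (hF : Fintype.card F % 2 = 1) {t : F} (ht : t ≠ 0) (q : F) :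
    ∃ u v : F, u ^ 2 + t * v ^ 2 = q := by
  obtain ⟨u, v, h⟩ := FiniteField.exists_root_sum_quadratic
    (f := X ^ 2 - C q) (g := C t * X ^ 2) (degree_X_pow_sub_C two_pos q) (by compute_degree!) hF
  exact ⟨u, v, by simp only [eval_sub, eval_pow, eval_X, eval_C, eval_mul] at h; linear_combination h⟩

namespace Matrix

variable {m n o R : Type*}

-- `!![u, -(t * v); v, u]` is the matrix of multiplication by `u + v √(-t)`.
theorem transpose_mul_diagonal_mul_eq_smul_of_sq_add_mul_sq [CommRing R]
    {t u v q : R} (h : u ^ 2 + t * v ^ 2 = q) :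
    (!![u, -(t * v); v, u])ᵀ * diagonal ![1, t] * !![u, -(t * v); v, u] =
      q • diagonal ![1, t] := by
  subst h
  ext i j
  fin_cases i <;> fin_cases j <;> simp [mul_apply, Fin.sum_univ_two] <;> ring

theorem blockDiagonal_transpose_mul_mul_eq_smul [Fintype m] [Fintype o] [DecidableEq o]
    [CommSemiring R] {C D : o → Matrix m m R} {q : R}
    (h : ∀ i, (C i)ᵀ * D i * C i = q • D i) :
    (blockDiagonal C)ᵀ * blockDiagonal D * blockDiagonal C = q • blockDiagonal D := by
  rw [blockDiagonal_transpose, ← blockDiagonal_mul, ← blockDiagonal_mul, ← blockDiagonal_smul]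
  exact congrArg _ (funext h)

theorem exists_transpose_mul_diagonal_mul_eq_smul_of_equiv [Fintype m] [Fintype n]
    [DecidableEq m] [DecidableEq n] [CommSemiring R] (e : m ≃ n) {d : n → R} {q : R}
    (h : ∃ C : Matrix m m R, Cᵀ * diagonal (d ∘ e) * C = q • diagonal (d ∘ e)) :
    ∃ C : Matrix n n R, Cᵀ * diagonal d * C = q • diagonal d := by
  obtain ⟨C, hC⟩ := h
  have hd : diagonal d = (diagonal (d ∘ e)).submatrix e.symm e.symm := by
    rw [submatrix_diagonal_equiv, Function.comp_assoc, e.self_comp_symm, Function.comp_id]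
  refine ⟨C.submatrix e.symm e.symm, ?_⟩
  rw [hd, transpose_submatrix, submatrix_mul_equiv, submatrix_mul_equiv, hC, submatrix_smul]
  rfl

theorem exists_transpose_mul_diagonal_mul_eq_smul_of_pairs {F : Type*} [Field F] [Fintype F]
    [Fintype o] [DecidableEq o] (hF : Fintype.card F % 2 = 1) {t : o → F} (ht : ∀ i, t i ≠ 0)
    (q : F) :
    ∃ C : Matrix (Fin 2 × o) (Fin 2 × o) F,
      Cᵀ * diagonal (fun i => ![1, t i.2] i.1) * C = q • diagonal (fun i => ![1, t i.2] i.1) := by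
  choose u v huv using fun i => FiniteField.exists_sq_add_mul_sq_eq hF (ht i) q
  refine ⟨blockDiagonal fun i => !![u i, -(t i * v i); v i, u i], ?_⟩
  rw [← blockDiagonal_diagonal fun i => ![1, t i]]
  exact blockDiagonal_transpose_mul_mul_eq_smul
    fun i => transpose_mul_diagonal_mul_eq_smul_of_sq_add_mul_sq (huv i)

end Matrix

theorem stmt_6_general (p : ℕ) (hp : p.Prime) (hodd : Odd p)
    (k : ℕ) (hkeven : Even k)
    (s : ZMod p) (hs : s ≠ 0)
    (q : ZMod p) :
    ∃ C : Matrix (Fin k) (Fin k) (ZMod p),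
      Cᵀ * (Matrix.diagonal fun i : Fin k => if i.val = k - 1 then s else 1) * C =
        q • (Matrix.diagonal fun i : Fin k => if i.val = k - 1 then s else 1) := by
  have : Fact p.Prime := ⟨hp⟩
  obtain ⟨n, rfl⟩ := hkeven
  let e : Fin 2 × Fin n ≃ Fin (n + n) :=
    (Equiv.prodComm _ _).trans (finProdFinEquiv.trans (finCongr (mul_two n)))
  have he : ∀ i, (e i).val = i.1.val + 2 * i.2.val := fun i => by simp [e, finProdFinEquiv]
  have hde : (fun i : Fin (n + n) => if i.val = n + n - 1 then s else 1) ∘ e =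
      fun i => ![1, if i.2.val = n - 1 then s else 1] i.1 := by
    ext ⟨r, m⟩
    have hm := m.isLt
    fin_cases r <;> simp [he] <;> grind
  apply exists_transpose_mul_diagonal_mul_eq_smul_of_equiv e
  rw [hde]
  have hcard : Fintype.card (ZMod p) % 2 = 1 := by rw [ZMod.card]; exact Nat.odd_iff.mp hodd
  have ht : ∀ m : Fin n, (if m.val = n - 1 then s else 1) ≠ 0 := fun m => by
    split_ifs
    exacts [hs, one_ne_zero]
  exact exists_transpose_mul_diagonal_mul_eq_smul_of_pairs hcard ht q

/-- Over `Fp = ZMod p` (`p` an odd prime), for `k` even and positive,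
`s` a nonsquare and `q ≠ 0`, with `D_s = diag(1, …, 1, s)` (k×k), there exists a
`k×k` matrix `C` with `Cᵀ·D_s·C = q·D_s`. -/
theorem stmt_6 (p : ℕ) (hp : p.Prime) (hodd : Odd p)
    (k : ℕ) (hk : 0 < k) (hkeven : Even k)
    (s : ZMod p) (hs : s ≠ 0) (hs2 : ¬∃ t : ZMod p, t ^ 2 = s)
    (q : ZMod p) (hq : q ≠ 0) :
    ∃ C : Matrix (Fin k) (Fin k) (ZMod p),
      Cᵀ * (Matrix.diagonal fun i : Fin k => if i.val = k - 1 then s else 1) * C =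
        q • (Matrix.diagonal fun i : Fin k => if i.val = k - 1 then s else 1) :=
  stmt_6_general p hp hodd k hkeven s hs q
end

section
/- Let p be an odd prime, Fp = ZMod p, let n ≥ 2, let 1 ≤ k ≤ n−1, and let s ∈ Fp be nonzero. Define d ∈ Fp^n by d_i = 1 for 1 ≤ i < k, d_k = s, and d_i = 0 for k < i ≤ n, and let D_s be the k×k diagonal matrix with diagonal entries d_1, …, d_k. For r ∈ Fp^n let τ(r) be the (n+1)×(n+1) matrix over Fp that agrees with the identity matrix except that its (i, n+1) entry is r_i for 1 ≤ i ≤ n and its (n, j) entry is d_j·r_j for 1 ≤ j ≤ n−1; let T = { τ(r) : r ∈ Fp^n }. Let P be an invertible n×n matrix over Fp, written in block form P = [[P₁₁, P₁₂, P₁₃], [P₂₁, P₂₂, P₂₃], [P₃₁, P₃₂, P₃₃]] with diagonal blocks of sizes k×k, (n−1−k)×(n−1−k) and 1×1, and let Q = [[P, 0], [0, 1]] be the corresponding block matrix in GL_{n+1}(Fp). Then Q·T·Q⁻¹ = T (as sets, conjugating each element of T by Q) if and only if P₁₂ = 0, P₁₃ = 0, P₂₃ = 0, and P₁₁ᵀ·D_s·P₁₁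 = q·D_s where q is the scalar entry of the 1×1 block P₃₃. -/
open Matrix

/-- `d_i` (0-indexed): `d i = 1` for `i + 1 < k`, `d i = s` for `i + 1 = k`,
and `d i = 0` otherwise. -/
def dvec (p k : ℕ) (s : ZMod p) (i : ℕ) : ZMod p :=
  if i + 1 < k then 1 else if i + 1 = k then s else 0

/-- The `(n+1)×(n+1)` matrix `τ(r)`: it agrees with the identity except that its
`(i, n+1)` entry is `r_i` for `1 ≤ i ≤ n` and its `(n, j)` entry is `d_j·r_j`
for `1 ≤ j ≤ n-1` (stated here with 0-indexed rows and columns). -/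
def tauM (p n k : ℕ) (s : ZMod p) (r : Fin n → ZMod p) :
    Matrix (Fin (n + 1)) (Fin (n + 1)) (ZMod p) :=
  Matrix.of fun i j =>
    if i.val = j.val then 1
    else if j.val = n then (if h : i.val < n then r ⟨i.val, h⟩ else 0)
    else if i.val = n - 1 then
      dvec p k s j.val * (if h : j.val < n then r ⟨j.val, h⟩ else 0)
    else 0

/-- `T(n,k,s) = { τ(r) : r ∈ Fp^n }`. -/
def Tset (p n k : ℕ) (s : ZMod p) :
    Set (Matrix (Fin (n + 1)) (Fin (n + 1)) (ZMod p)) :=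
  { M | ∃ r : Fin n → ZMod p, M = tauM p n k s r }

/-- The block matrix `Q = [[P, 0], [0, 1]]` in `M_{n+1}(Fp)`. -/
def QofP (p n : ℕ) (P : Matrix (Fin n) (Fin n) (ZMod p)) :
    Matrix (Fin (n + 1)) (Fin (n + 1)) (ZMod p) :=
  Matrix.reindex finSumFinEquiv finSumFinEquiv
    (Matrix.fromBlocks P 0 0 (1 : Matrix (Fin 1) (Fin 1) (ZMod p)))

/-!
Write `e` for the last basis vector of `Fpⁿ`, `D = diag(d)` and `q = P₃₃`. Then
`τ(r) = [[1 + e (D r)ᵀ, r], [0, 1]]` and `Q = [[P, 0], [0, 1]]`, so `Q τ(r) Q⁻¹` is again of the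
form `[[*, P r], [0, 1]]`, and it lies in `T` exactly when it equals `τ(P r)`, i.e. when
`P e (D r)ᵀ = e (D P r)ᵀ P`. Asking this for all `r` and comparing rows gives `P e = q e` and
`Pᵀ D P = q D`. As `D` is supported on the first `k` coordinates, with nonzero entries there, and
`Pᵀ` is injective, the columns `j ≥ k` of `Pᵀ D P = q D` force `P₁₂ = 0` and `P₁₃ = 0`, after which
the equation reduces to its top-left block `P₁₁ᵀ D_s P₁₁ = q D_s`.
-/

section AffineBlock

variable {R : Type*} [CommRing R] {n : ℕ}

/-- `[[A, v], [0, 1]]`, the matrix of the affine map `x ↦ A x + v`. -/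
def affineBlock (A : Matrix (Fin n) (Fin n) R) (v : Fin n → R) :
    Matrix (Fin (n + 1)) (Fin (n + 1)) R :=
  reindex finSumFinEquiv finSumFinEquiv (fromBlocks A (replicateCol (Fin 1) v) 0 1)

@[simp] lemma affineBlock_castSucc_castSucc (A : Matrix (Fin n) (Fin n) R) (v : Fin n → R)
    (i j : Fin n) : affineBlock A v i.castSucc j.castSucc = A i j := by
  simp [affineBlock]

@[simp] lemma affineBlock_castSucc_last (A : Matrix (Fin n) (Fin n) R) (v : Fin n → R)
    (i : Fin n) : affineBlock A v i.castSucc (Fin.last n) = v i := by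
  simp [affineBlock]

@[simp] lemma affineBlock_last_castSucc (A : Matrix (Fin n) (Fin n) R) (v : Fin n → R)
    (j : Fin n) : affineBlock A v (Fin.last n) j.castSucc = 0 := by
  simp [affineBlock]

@[simp] lemma affineBlock_last_last (A : Matrix (Fin n) (Fin n) R) (v : Fin n → R) :
    affineBlock A v (Fin.last n) (Fin.last n) = 1 := by
  simp [affineBlock]

lemma affineBlock_mul (A B : Matrix (Fin n) (Fin n) R) (v w : Fin n → R) :
    affineBlock A v * affineBlock B w = affineBlock (A * B) (A *ᵥ w + v) := by
  simp only [affineBlock, reindex_apply, submatrix_mul_equiv, fromBlocks_multiply,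
    replicateCol_add, replicateCol_mulVec]
  simp

lemma affineBlock_inj {A B : Matrix (Fin n) (Fin n) R} {v w : Fin n → R} :
    affineBlock A v = affineBlock B w ↔ A = B ∧ v = w := by
  rw [affineBlock, affineBlock, (reindex _ _).injective.eq_iff, fromBlocks_inj, replicateCol_inj]
  simp

lemma det_affineBlock (A : Matrix (Fin n) (Fin n) R) (v : Fin n → R) :
    (affineBlock A v).det = A.det := by
  simp [affineBlock]

end AffineBlock

section TransposeDiagonal

variable {K ι : Type*} [Field K] [Fintype ι] [DecidableEq ι]

theorem forall_mul_vecMulVec_single_eq_iff {P D : Matrix ι ι K} (hD : D ≠ 0) (l : ι) :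
    (∀ r : ι → K, P * vecMulVec (Pi.single l 1) (D *ᵥ r) =
        vecMulVec (Pi.single l 1) (D *ᵥ P *ᵥ r) * P) ↔
      (∀ i ≠ l, P i l = 0) ∧ Pᵀ * D * P = P l l • D := by
  have hrhs : ∀ r, vecMulVec (Pi.single l 1) (D *ᵥ P *ᵥ r) * P =
      vecMulVec (Pi.single l 1) ((Pᵀ * D * P) *ᵥ r) := fun r => by
    rw [vecMulVec_mul, ← mulVec_transpose, mulVec_mulVec, mulVec_mulVec, Matrix.mul_assoc]
  simp only [hrhs, mul_vecMulVec, mulVec_single_one]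
  constructor
  · intro h
    have hrow : ∀ i, P i l • D = (Pi.single l 1 : ι → K) i • (Pᵀ * D * P) := fun i => by
      ext m j
      simpa [vecMulVec_apply] using congrFun₂ (h (Pi.single j 1)) i m
    refine ⟨fun i hi => ?_, by simpa using (hrow l).symm⟩
    have := hrow i
    rw [Pi.single_eq_of_ne hi, zero_smul, smul_eq_zero] at this
    exact this.resolve_right hD
  · rintro ⟨hcol, hM⟩ r
    ext i j
    rw [hM, vecMulVec_apply, vecMulVec_apply]
    by_cases hi : i = l
    · subst hi
      simp [smul_mulVec]
    · simp [hcol i hi, Pi.single_eq_of_ne hi]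

lemma transpose_mul_diagonal_mul_apply (P : Matrix ι ι K) (d : ι → K) (a b : ι) :
    (Pᵀ * diagonal d * P) a b = ∑ m, d m * P m a * P m b := by
  rw [mul_apply]
  simp only [mul_diagonal, transpose_apply]
  exact Finset.sum_congr rfl fun m _ => by ring

variable {κ : Type*} [Fintype κ] [DecidableEq κ]

lemma submatrix_transpose_mul_diagonal_mul {f : κ → ι} (hf : f.Injective) (P : Matrix ι ι K)
    {d : ι → K} (hd : ∀ i ∉ Set.range f, d i = 0) :
    (Pᵀ * diagonal d * P).submatrix f f =
      (P.submatrix f f)ᵀ * diagonal (d ∘ f) * P.submatrix f f := by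
  ext a b
  rw [submatrix_apply, transpose_mul_diagonal_mul_apply, transpose_mul_diagonal_mul_apply]
  refine (Fintype.sum_of_injective f hf _ _ (fun i hi => ?_) fun c => rfl).symm
  rw [hd i hi, zero_mul, zero_mul]

theorem transpose_mul_diagonal_mul_eq_smul_iff {P : Matrix ι ι K} (hP : IsUnit P)
    {f : κ → ι} (hf : f.Injective) {d : ι → K} (hd₀ : ∀ i ∉ Set.range f, d i = 0)
    (hd : ∀ c, d (f c) ≠ 0) (q : K) :
    Pᵀ * diagonal d * P = q • diagonal d ↔
      (∀ c j, j ∉ Set.range f → P (f c) j = 0) ∧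
        (P.submatrix f f)ᵀ * diagonal (d ∘ f) * P.submatrix f f = q • diagonal (d ∘ f) := by
  rw [← submatrix_transpose_mul_diagonal_mul hf P hd₀, ← submatrix_diagonal _ _ hf]
  constructor
  · intro h
    refine ⟨fun c j hj => ?_, by rw [h]; rfl⟩
    -- column `j` of `Pᵀ D P = q D` vanishes, and `Pᵀ` is injective
    have hcol : Pᵀ *ᵥ (diagonal d *ᵥ P.col j) = 0 := by
      rw [mulVec_mulVec, ← mulVec_single_one, mulVec_mulVec, h,
        smul_mulVec, mulVec_single_one]
      ext i
      by_cases hij : i = j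
      · simp [hij, hd₀ j hj]
      · simp [hij]
    rw [← mulVec_zero Pᵀ] at hcol
    have := congrFun (mulVec_injective_iff_isUnit.2 ((isUnit_transpose P).2 hP) hcol) (f c)
    rw [mulVec_diagonal, Pi.zero_apply, mul_eq_zero] at this
    exact this.resolve_left (hd c)
  · rintro ⟨hvan, hsub⟩
    ext a b
    by_cases hab : a ∈ Set.range f ∧ b ∈ Set.range f
    · obtain ⟨⟨a, rfl⟩, ⟨b, rfl⟩⟩ := hab
      exact congrFun₂ hsub a b
    -- otherwise both sides vanish: each term of the left one has a factor `d m = 0` or `P m a = 0`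
    rw [transpose_mul_diagonal_mul_apply, Matrix.smul_apply, diagonal_apply]
    rw [not_and_or] at hab
    have hdiag : (if a = b then d a else 0) = 0 := by
      split_ifs with h
      · subst h
        exact hd₀ a (hab.elim id id)
      · rfl
    rw [hdiag, smul_zero]
    refine Finset.sum_eq_zero fun m _ => ?_
    by_cases hm : m ∈ Set.range f
    · obtain ⟨c, rfl⟩ := hm
      rcases hab with ha | hb
      · rw [hvan c a ha, mul_zero, zero_mul]
      · rw [hvan c b hb, mul_zero]
    · rw [hd₀ m hm, zero_mul, zero_mul]

end TransposeDiagonal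

section Conjugation

variable {p n k : ℕ} {s : ZMod p}

lemma dvec_of_le {i : ℕ} (h : k ≤ i) : dvec p k s i = 0 := by
  rw [dvec, if_neg (by omega), if_neg (by omega)]

lemma dvec_ne_zero [Nontrivial (ZMod p)] (hs : s ≠ 0) {i : ℕ} (h : i < k) : dvec p k s i ≠ 0 := by
  unfold dvec
  split_ifs
  · exact one_ne_zero
  · exact hs
  · omega

lemma QofP_eq_affineBlock (P : Matrix (Fin n) (Fin n) (ZMod p)) :
    QofP p n P = affineBlock P 0 := by
  rw [QofP, affineBlock, replicateCol_zero]

lemma tauM_eq_affineBlock (hn : 0 < n) (hk : k ≤ n - 1) (r : Fin n → ZMod p) :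
    tauM p n k s r = affineBlock (1 + vecMulVec (Pi.single ⟨n - 1, by omega⟩ 1)
      (diagonal (fun j : Fin n => dvec p k s j) *ᵥ r)) r := by
  ext i j
  induction i using Fin.lastCases with
  | last =>
    induction j using Fin.lastCases with
    | last => simp [tauM]
    | cast j =>
      have := j.isLt
      simp only [tauM, of_apply, Fin.val_last, Fin.val_castSucc, affineBlock_last_castSucc]
      rw [if_neg (by omega), if_neg (by omega), if_neg (by omega)]
  | cast i =>
    have := i.isLt
    induction j using Fin.lastCases with
    | last =>
      simp [tauM, i.isLt.ne]
    | cast j =>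
      have := j.isLt
      simp only [tauM, of_apply, Fin.val_castSucc, affineBlock_castSucc_castSucc, Matrix.add_apply,
        one_apply, vecMulVec_apply, mulVec_diagonal, Pi.single_apply, Fin.ext_iff, dif_pos j.isLt,
        j.isLt.ne, if_false]
      split_ifs with hij hi
      · rw [dvec_of_le (by omega)]
        simp
      all_goals simp

lemma QofP_mul_tauM_eq_iff (hn : 0 < n) (hk : k ≤ n - 1) (P : Matrix (Fin n) (Fin n) (ZMod p))
    (r r' : Fin n → ZMod p) :
    QofP p n P * tauM p n k s r = tauM p n k s r' * QofP p n P ↔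
      r' = P *ᵥ r ∧
        P * vecMulVec (Pi.single ⟨n - 1, by omega⟩ 1)
            (diagonal (fun j : Fin n => dvec p k s j) *ᵥ r) =
          vecMulVec (Pi.single ⟨n - 1, by omega⟩ 1)
            (diagonal (fun j : Fin n => dvec p k s j) *ᵥ r') * P := by
  rw [QofP_eq_affineBlock, tauM_eq_affineBlock hn hk, tauM_eq_affineBlock hn hk, affineBlock_mul,
    affineBlock_mul, affineBlock_inj, mul_add, add_mul, mul_one, one_mul, add_right_inj,
    mulVec_zero, add_zero, zero_add, eq_comm (a := P *ᵥ r), and_comm]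

theorem conj_image_Tset_eq_iff (hn : 0 < n) (hk : k ≤ n - 1) {P : Matrix (Fin n) (Fin n) (ZMod p)}
    (hP : IsUnit P) :
    (fun M => QofP p n P * M * (QofP p n P)⁻¹) '' Tset p n k s = Tset p n k s ↔
      ∀ r : Fin n → ZMod p,
        P * vecMulVec (Pi.single ⟨n - 1, by omega⟩ 1)
            (diagonal (fun j : Fin n => dvec p k s j) *ᵥ r) =
          vecMulVec (Pi.single ⟨n - 1, by omega⟩ 1)
            (diagonal (fun j : Fin n => dvec p k s j) *ᵥ P *ᵥ r) * P := by
  have hPdet := (isUnit_iff_isUnit_det P).1 hP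
  let : Invertible (QofP p n P) :=
    invertibleOfIsUnitDet _ (by rwa [QofP_eq_affineBlock, det_affineBlock])
  constructor
  · intro h r
    obtain ⟨r', hr'⟩ : QofP p n P * tauM p n k s r * (QofP p n P)⁻¹ ∈ Tset p n k s :=
      h ▸ Set.mem_image_of_mem _ ⟨r, rfl⟩
    rw [mul_inv_eq_iff_eq_mul_of_invertible, QofP_mul_tauM_eq_iff hn hk] at hr'
    obtain ⟨rfl, hcomm⟩ := hr'
    exact hcomm
  · intro h
    have hconj : ∀ r, QofP p n P * tauM p n k s r * (QofP p n P)⁻¹ = tauM p n k s (P *ᵥ r) :=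
      fun r => by
        rw [mul_inv_eq_iff_eq_mul_of_invertible, QofP_mul_tauM_eq_iff hn hk]
        exact ⟨rfl, h r⟩
    ext M
    constructor
    · rintro ⟨_, ⟨r, rfl⟩, rfl⟩
      exact ⟨_, hconj r⟩
    · rintro ⟨r, rfl⟩
      refine ⟨_, ⟨P⁻¹ *ᵥ r, rfl⟩, (hconj _).trans ?_⟩
      rw [mulVec_mulVec, mul_nonsing_inv _ hPdet, one_mulVec]

end Conjugation

lemma col_last_and_upperRight_eq_zero_iff {R : Type*} [Zero R] {n k : ℕ} (hn : 0 < n)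
    (hk : k ≤ n - 1) (P : Matrix (Fin n) (Fin n) R) :
    ((∀ i ≠ (⟨n - 1, by omega⟩ : Fin n), P i ⟨n - 1, by omega⟩ = 0) ∧
        ∀ c : Fin k, ∀ j ∉ Set.range (Fin.castLE (by omega : k ≤ n)),
          P (Fin.castLE (by omega) c) j = 0) ↔
      (∀ i j : Fin n, i.val < k → k ≤ j.val → j.val < n - 1 → P i j = 0) ∧
        (∀ i : Fin n, i.val < k → P i ⟨n - 1, by omega⟩ = 0) ∧
        (∀ i : Fin n, k ≤ i.val → i.val < n - 1 → P i ⟨n - 1, by omega⟩ = 0) := by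
  simp only [Fin.range_castLE, Set.mem_ofPred_eq, not_lt, ne_eq, Fin.ext_iff]
  constructor
  · rintro ⟨hcol, hupper⟩
    exact ⟨fun i j hi hj _ => hupper ⟨i, hi⟩ j hj, fun i hi => hcol i (by omega),
      fun i _ hi => hcol i (by omega)⟩
  · rintro ⟨hupper, hcol₁, hcol₂⟩
    refine ⟨fun i hi => ?_, fun c j hj => ?_⟩
    · by_cases hik : i.val < k
      · exact hcol₁ i hik
      · exact hcol₂ i (by omega) (by omega)
    · by_cases hj' : j.val < n - 1
      · exact hupper _ j c.isLt hj hj'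
      · rw [show j = ⟨n - 1, by omega⟩ from Fin.ext (by simp only; omega)]
        exact hcol₁ _ c.isLt

/-- `Q·T·Q⁻¹ = T` iff `P₁₂ = 0`, `P₁₃ = 0`, `P₂₃ = 0`, and
`P₁₁ᵀ·D_s·P₁₁ = q·D_s` where `q = P₃₃`. -/
theorem stmt_7 (p : ℕ) (hp : p.Prime) (n k : ℕ)
    (hk1 : 1 ≤ k) (hk2 : k ≤ n - 1)
    (s : ZMod p) (hs : s ≠ 0)
    (P : Matrix (Fin n) (Fin n) (ZMod p)) (hP : IsUnit P) :
    (fun M => QofP p n P * M * (QofP p n P)⁻¹) '' Tset p n k s = Tset p n k s ↔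
      ((∀ i j : Fin n, i.val < k → k ≤ j.val → j.val < n - 1 → P i j = 0) ∧
       (∀ i : Fin n, i.val < k → P i ⟨n - 1, by omega⟩ = 0) ∧
       (∀ i : Fin n, k ≤ i.val → i.val < n - 1 → P i ⟨n - 1, by omega⟩ = 0) ∧
       ((Matrix.of fun a b : Fin k =>
            P (Fin.castLE (by omega) a) (Fin.castLE (by omega) b))ᵀ *
          Matrix.diagonal (fun i : Fin k => dvec p k s i.val) *
          (Matrix.of fun a b : Fin k =>
            P (Fin.castLE (by omega) a) (Fin.castLE (by omega) b)) =
          P ⟨n - 1, by omega⟩ ⟨n - 1, by omega⟩ •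
            Matrix.diagonal (fun i : Fin k => dvec p k s i.val))) := by
  have : Fact p.Prime := ⟨hp⟩
  have hkn : k ≤ n := by omega
  have hd₀ : ∀ i ∉ Set.range (Fin.castLE hkn), dvec p k s (i : ℕ) = 0 := fun i hi =>
    dvec_of_le (by simpa [Fin.range_castLE] using hi)
  have hd : ∀ c : Fin k, dvec p k s (Fin.castLE hkn c : ℕ) ≠ 0 := fun c => dvec_ne_zero hs c.isLt
  have hD : diagonal (fun j : Fin n => dvec p k s j) ≠ 0 := fun h =>
    hd ⟨k - 1, by omega⟩ (congrFun (diagonal_eq_zero.1 h) _)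
  rw [conj_image_Tset_eq_iff (by omega) hk2 hP, forall_mul_vecMulVec_single_eq_iff hD,
    transpose_mul_diagonal_mul_eq_smul_iff hP (Fin.castLE_injective hkn) hd₀ hd, ← and_assoc,
    col_last_and_upperRight_eq_zero_iff (by omega) hk2, and_assoc, and_assoc]
  rfl
end

section
/- Let p be an odd prime and Fp = ZMod p. Let T ⊆ GL_4(Fp) be the set of matrices [[1, 0, 0, r₁], [0, 1, 0, r₂], [r₁, 0, 1, r₃], [0, 0, 0, 1]] for r₁, r₂, r₃ ∈ Fp. Then the number of distinct sets of the form { Q_P·M·Q_P⁻¹ : M ∈ T }, as P ranges over GL_3(Fp) and Q_P = [[P,0],[0,1]] ∈ GL_4(Fp), equals (p³ − 1)(p + 1). -/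
open Matrix

/-!
`GL₃(𝔽_p)` acts on sets of `4 × 4` matrices by `P • S = Q_P S Q_P⁻¹`, and the sets to be counted
form the orbit of `T`; so their number is the index of the stabilizer of `T`.

An element of `T` is the affine matrix `[[A, w], [0, 1]]` with `w = (r₁, r₂, r₃)` and
`A = 1 + r₁ E₂₀`, so `T` is the graph of `f w = 1 + w₀ E₂₀`. Conjugation by `Q_P` turns the graph
of `f` into the graph of `w ↦ P f(P⁻¹ w) P⁻¹`, hence `P` stabilizes `T` iff `P f(v) = f(P v) P`
for all `v`. Comparing entries, this says exactly that `P` is lower triangular with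
`P₂₂ = P₀₀²`; there are `(p - 1)² p³` such matrices, and dividing
`|GL₃(𝔽_p)| = (p³ - 1)(p³ - p)(p³ - p²)` by this gives `(p³ - 1)(p + 1)`.
-/

open Pointwise

section Conjugation

variable {p n : ℕ}

theorem QofP_mul (A B : Matrix (Fin n) (Fin n) (ZMod p)) :
    QofP p n (A * B) = QofP p n A * QofP p n B := by
  simp [QofP, fromBlocks_multiply]

theorem QofP_one : QofP p n 1 = 1 := by
  simp [QofP, fromBlocks_one]

theorem inv_QofP (P : GL (Fin n) (ZMod p)) : (QofP p n P)⁻¹ = QofP p n ↑P⁻¹ :=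
  inv_eq_right_inv (by rw [← QofP_mul, Units.mul_inv, QofP_one])

instance : MulAction (GL (Fin n) (ZMod p)) (Matrix (Fin (n + 1)) (Fin (n + 1)) (ZMod p)) where
  smul P M := QofP p n P * M * QofP p n ↑P⁻¹
  one_smul M := by simp [HSMul.hSMul, QofP_one]
  mul_smul P R M := by simp [HSMul.hSMul, QofP_mul, Matrix.mul_assoc]

theorem smul_eq_conj_QofP (P : GL (Fin n) (ZMod p))
    (M : Matrix (Fin (n + 1)) (Fin (n + 1)) (ZMod p)) :
    P • M = QofP p n P * M * (QofP p n P)⁻¹ := by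
  rw [inv_QofP]
  rfl

theorem range_conj_QofP_eq_orbit (S : Set (Matrix (Fin (n + 1)) (Fin (n + 1)) (ZMod p))) :
    (Set.range fun P : GL (Fin n) (ZMod p) =>
        (fun M => QofP p n P * M * (QofP p n P)⁻¹) '' S) =
      MulAction.orbit (GL (Fin n) (ZMod p)) S := by
  simp only [← smul_eq_conj_QofP, Set.image_smul]
  rfl

end Conjugation

section AffineGraph

variable {R : Type*} [CommRing R] {n : ℕ}

def affineMatrix (A : Matrix (Fin n) (Fin n) R) (w : Fin n → R) :
    Matrix (Fin (n + 1)) (Fin (n + 1)) R :=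
  reindex finSumFinEquiv finSumFinEquiv (fromBlocks A (replicateCol (Fin 1) w) 0 1)

theorem affineMatrix_castSucc_castSucc (A : Matrix (Fin n) (Fin n) R) (w : Fin n → R)
    (i j : Fin n) : affineMatrix A w i.castSucc j.castSucc = A i j := by
  simp [affineMatrix]

theorem affineMatrix_castSucc_last (A : Matrix (Fin n) (Fin n) R) (w : Fin n → R) (i : Fin n) :
    affineMatrix A w i.castSucc (Fin.last n) = w i := by
  simp [affineMatrix]

theorem affineMatrix_last_castSucc (A : Matrix (Fin n) (Fin n) R) (w : Fin n → R) (j : Fin n) :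
    affineMatrix A w (Fin.last n) j.castSucc = 0 := by
  simp [affineMatrix]

theorem affineMatrix_last_last (A : Matrix (Fin n) (Fin n) R) (w : Fin n → R) :
    affineMatrix A w (Fin.last n) (Fin.last n) = 1 := by
  simp [affineMatrix]

theorem affineMatrix_inj {A B : Matrix (Fin n) (Fin n) R} {v w : Fin n → R} :
    affineMatrix A v = affineMatrix B w ↔ A = B ∧ v = w := by
  rw [affineMatrix, affineMatrix, (reindex _ _).injective.eq_iff, fromBlocks_inj]
  simp [replicateCol_inj]

def affineGraph (f : (Fin n → R) → Matrix (Fin n) (Fin n) R) :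
    Set (Matrix (Fin (n + 1)) (Fin (n + 1)) R) :=
  Set.range fun w => affineMatrix (f w) w

theorem affineGraph_inj {f g : (Fin n → R) → Matrix (Fin n) (Fin n) R} :
    affineGraph f = affineGraph g ↔ f = g := by
  refine ⟨fun h => funext fun w => ?_, fun h => h ▸ rfl⟩
  obtain ⟨v, hv⟩ : affineMatrix (f w) w ∈ affineGraph g := h ▸ Set.mem_range_self w
  obtain ⟨hfg, rfl⟩ := affineMatrix_inj.1 hv
  exact hfg.symm

end AffineGraph

section AffineGraphAction

variable {p n : ℕ}

theorem smul_affineMatrix (P : GL (Fin n) (ZMod p)) (A : Matrix (Fin n) (Fin n) (ZMod p))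
    (w : Fin n → ZMod p) :
    P • affineMatrix A w = affineMatrix
      ((P : Matrix (Fin n) (Fin n) (ZMod p)) * A * (P : Matrix (Fin n) (Fin n) (ZMod p))⁻¹)
      (P *ᵥ w) := by
  change QofP p n P * _ * QofP p n ↑P⁻¹ = _
  simp [QofP, affineMatrix, fromBlocks_multiply, replicateCol_mulVec]

theorem smul_affineGraph (P : GL (Fin n) (ZMod p))
    (f : (Fin n → ZMod p) → Matrix (Fin n) (Fin n) (ZMod p)) :
    P • affineGraph f = affineGraph fun w =>
      (P : Matrix (Fin n) (Fin n) (ZMod p)) * f ((P : Matrix (Fin n) (Fin n) (ZMod p))⁻¹ *ᵥ w) *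
        (P : Matrix (Fin n) (Fin n) (ZMod p))⁻¹ := by
  have hP : Function.Surjective (P *ᵥ ·) :=
    fun w => ⟨(P : Matrix (Fin n) (Fin n) (ZMod p))⁻¹ *ᵥ w, by simp⟩
  rw [affineGraph, affineGraph, ← Set.image_smul, ← Set.range_comp, eq_comm, ← hP.range_comp]
  congr 1
  ext w : 1
  simp [smul_affineMatrix]

theorem mem_stabilizer_affineGraph_iff (P : GL (Fin n) (ZMod p))
    (f : (Fin n → ZMod p) → Matrix (Fin n) (Fin n) (ZMod p)) :
    P ∈ MulAction.stabilizer (GL (Fin n) (ZMod p)) (affineGraph f) ↔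
      ∀ v, (P : Matrix (Fin n) (Fin n) (ZMod p)) * f v = f (P *ᵥ v) * P := by
  have hP := isUnits_det_units P
  rw [MulAction.mem_stabilizer_iff, smul_affineGraph, affineGraph_inj, funext_iff]
  refine ⟨fun h v => ?_, fun h w => ?_⟩
  · rw [← h (P *ᵥ v)]
    simp [hP, Matrix.mul_assoc]
  · rw [h]
    simp [hP, Matrix.mul_assoc]

end AffineGraphAction

section Stabilizer

variable {R : Type*} [CommRing R]

def lowerMat (a d : R) (x : Fin 3 → R) : Matrix (Fin 3) (Fin 3) R :=
  !![a, 0, 0; x 0, d, 0; x 1, x 2, a ^ 2]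

theorem det_lowerMat (a d : R) (x : Fin 3 → R) : (lowerMat a d x).det = a ^ 3 * d := by
  rw [lowerMat, det_fin_three]
  simp only [of_apply, cons_val', cons_val_zero, cons_val_one, cons_val, cons_val_fin_one,
    mul_zero, zero_mul, sub_zero, add_zero]
  ring

theorem lowerMat_injective {a d a' d' : R} {x x' : Fin 3 → R}
    (h : lowerMat a d x = lowerMat a' d' x') : a = a' ∧ d = d' ∧ x = x' := by
  refine ⟨congr($h 0 0), congr($h 1 1), funext fun i => ?_⟩
  fin_cases i
  exacts [congr($h 1 0), congr($h 2 0), congr($h 2 1)]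

variable (p : ℕ)

def transvectionGraph : Set (Matrix (Fin 4) (Fin 4) (ZMod p)) :=
  affineGraph fun w : Fin 3 → ZMod p => transvection 2 0 (w 0)

theorem transvectionGraph_eq :
    transvectionGraph p = { M | ∃ r₁ r₂ r₃ : ZMod p,
        M = !![1, 0, 0, r₁; 0, 1, 0, r₂; r₁, 0, 1, r₃; 0, 0, 0, 1] } := by
  have key (w : Fin 3 → ZMod p) : affineMatrix (transvection 2 0 (w 0)) w =
      !![1, 0, 0, w 0; 0, 1, 0, w 1; w 0, 0, 1, w 2; 0, 0, 0, 1] := by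
    ext i j
    induction i using Fin.lastCases <;> induction j using Fin.lastCases
    case last.last => rw [affineMatrix_last_last]; rfl
    case last.cast j => rw [affineMatrix_last_castSucc]; fin_cases j <;> rfl
    case cast.last i => rw [affineMatrix_castSucc_last]; fin_cases i <;> rfl
    case cast.cast i j =>
      rw [affineMatrix_castSucc_castSucc]
      fin_cases i <;> fin_cases j <;> simp [transvection, one_apply]
  ext M
  simp only [transvectionGraph, affineGraph, key, Set.mem_range]
  constructor
  · rintro ⟨w, rfl⟩
    exact ⟨w 0, w 1, w 2, rfl⟩
  · rintro ⟨r₁, r₂, r₃, rfl⟩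
    exact ⟨![r₁, r₂, r₃], rfl⟩

variable {p} [Fact p.Prime]

theorem mem_stabilizer_transvectionGraph_iff (P : GL (Fin 3) (ZMod p)) :
    P ∈ MulAction.stabilizer (GL (Fin 3) (ZMod p)) (transvectionGraph p) ↔
      ∃ a d x, (P : Matrix (Fin 3) (Fin 3) (ZMod p)) = lowerMat a d x := by
  rw [transvectionGraph, mem_stabilizer_affineGraph_iff]
  set A : Matrix (Fin 3) (Fin 3) (ZMod p) := ↑P
  constructor
  · intro h
    have h01 : A 0 1 = 0 := by
      simpa [mulVec, dotProduct, Fin.sum_univ_three] using congr($(h (Pi.single 1 1)) 2 1)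
    have h02 : A 0 2 = 0 := by
      simpa [mulVec, dotProduct, Fin.sum_univ_three] using congr($(h (Pi.single 2 1)) 2 2)
    have h12 : A 1 2 = 0 := by
      simpa [mulVec, dotProduct, Fin.sum_univ_three] using congr($(h (Pi.single 0 1)) 1 0)
    have h22 : A 2 2 = A 0 0 * A 0 0 := by
      simpa [mulVec, dotProduct, Fin.sum_univ_three] using congr($(h (Pi.single 0 1)) 2 0)
    refine ⟨A 0 0, A 1 1, ![A 1 0, A 2 0, A 2 1], ?_⟩
    rw [eta_fin_three A, lowerMat, h01, h02, h12, h22, sq]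
    rfl
  · rintro ⟨a, d, x, hA⟩ v
    ext i j
    fin_cases i <;> fin_cases j <;>
      simp [hA, lowerMat, mulVec, dotProduct, Fin.sum_univ_three, sq, mul_comm, mul_left_comm,
        mul_assoc]

def stabilizerParam (x : (ZMod p)ˣ × (ZMod p)ˣ × (Fin 3 → ZMod p)) : GL (Fin 3) (ZMod p) :=
  .mkOfDetNeZero (lowerMat x.1 x.2.1 x.2.2) (by simp [det_lowerMat])

theorem stabilizerParam_injective : Function.Injective (stabilizerParam (p := p)) := by
  rintro ⟨a, d, x⟩ ⟨a', d', x'⟩ h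
  obtain ⟨ha, hd, hx⟩ := lowerMat_injective congr(($h : Matrix (Fin 3) (Fin 3) (ZMod p)))
  exact Prod.ext (Units.ext ha) (Prod.ext (Units.ext hd) hx)

theorem coe_stabilizer_transvectionGraph :
    (MulAction.stabilizer (GL (Fin 3) (ZMod p)) (transvectionGraph p) : Set (GL (Fin 3) (ZMod p))) =
      Set.range stabilizerParam := by
  ext P
  rw [SetLike.mem_coe, mem_stabilizer_transvectionGraph_iff]
  constructor
  · rintro ⟨a, d, x, hP⟩
    have hdet : a ^ 3 * d ≠ 0 := by
      rw [← det_lowerMat, ← hP]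
      exact P.det_ne_zero
    refine ⟨(Units.mk0 a (pow_ne_zero_iff three_ne_zero |>.1 (left_ne_zero_of_mul hdet)),
      Units.mk0 d (right_ne_zero_of_mul hdet), x), Units.ext hP.symm⟩
  · rintro ⟨⟨a, d, x⟩, rfl⟩
    exact ⟨a, d, x, rfl⟩

theorem card_stabilizer_transvectionGraph :
    Nat.card (MulAction.stabilizer (GL (Fin 3) (ZMod p)) (transvectionGraph p)) =
      (p - 1) ^ 2 * p ^ 3 := by
  rw [← SetLike.coe_sort_coe, coe_stabilizer_transvectionGraph,
    Nat.card_range_of_injective stabilizerParam_injective, Nat.card_prod, Nat.card_prod,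
    Nat.card_fun, Nat.card_eq_fintype_card, ZMod.card_units, Nat.card_zmod, Nat.card_fin]
  ring

theorem index_stabilizer_transvectionGraph :
    (MulAction.stabilizer (GL (Fin 3) (ZMod p)) (transvectionGraph p)).index =
      (p ^ 3 - 1) * (p + 1) := by
  have hcard := (MulAction.stabilizer (GL (Fin 3) (ZMod p)) (transvectionGraph p)).card_mul_index
  rw [card_stabilizer_transvectionGraph, Matrix.card_GL_field, ZMod.card, Fin.prod_univ_three]
    at hcard
  have hp : p.Prime := Fact.out
  have hp1 : 0 < p - 1 := Nat.sub_pos_of_lt hp.one_lt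
  apply Nat.eq_of_mul_eq_mul_left (Nat.mul_pos (pow_pos hp1 2) (pow_pos hp.pos 3))
  rw [hcard]
  have h1 : 1 ≤ p := hp.one_le
  have h2 : p ≤ p ^ 3 := Nat.le_self_pow (by norm_num) p
  have h3 : p ^ 2 ≤ p ^ 3 := Nat.pow_le_pow_right hp.pos (by norm_num)
  have h4 : 1 ≤ p ^ 3 := Nat.one_le_pow _ _ hp.pos
  simp only [Fin.val_zero, Fin.val_one, Fin.val_two, pow_zero, pow_one]
  zify [h1, h2, h3, h4]
  ring

end Stabilizer

theorem stmt_12_general (p : ℕ) (hp : p.Prime) :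
    Nat.card (Set.range fun P : GL (Fin 3) (ZMod p) =>
        (fun M => QofP p 3 (P : Matrix (Fin 3) (Fin 3) (ZMod p)) * M *
            (QofP p 3 (P : Matrix (Fin 3) (Fin 3) (ZMod p)))⁻¹) ''
          { M | ∃ r₁ r₂ r₃ : ZMod p,
              M = !![1, 0, 0, r₁; 0, 1, 0, r₂; r₁, 0, 1, r₃; 0, 0, 0, 1] }) =
      (p ^ 3 - 1) * (p + 1) := by
  have := Fact.mk hp
  rw [← transvectionGraph_eq, range_conj_QofP_eq_orbit, Nat.card_coe_set_eq,
    ← MulAction.index_stabilizer, index_stabilizer_transvectionGraph]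

/-- For `T = { [[1,0,0,r₁],[0,1,0,r₂],[r₁,0,1,r₃],[0,0,0,1]] }`,
the number of distinct sets `Q_P·T·Q_P⁻¹` for `P ∈ GL_3(Fp)` is `(p³-1)(p+1)`. -/
theorem stmt_12 (p : ℕ) (hp : p.Prime) (hodd : Odd p) :
    Nat.card (Set.range fun P : GL (Fin 3) (ZMod p) =>
        (fun M => QofP p 3 (P : Matrix (Fin 3) (Fin 3) (ZMod p)) * M *
            (QofP p 3 (P : Matrix (Fin 3) (Fin 3) (ZMod p)))⁻¹) ''
          { M | ∃ r₁ r₂ r₃ : ZMod p,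
              M = !![1, 0, 0, r₁; 0, 1, 0, r₂; r₁, 0, 1, r₃; 0, 0, 0, 1] }) =
      (p ^ 3 - 1) * (p + 1) :=
  stmt_12_general p hp
end
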